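/- Let d, k, N be integers with N > d > k ≥ 1. Then Q_{d,k}(N+1) < Q_{d,k}(N); that is, the normalized expected k-face number of the Cover–Efron cone is strictly decreasing in N. -/

import Mathlib

/-!
Write `S(n, t) = ∑_{i < t} C(n, i)`, so that `Q d k N = 2^k S(N-k-1, d-k) / S(N-1, d)`.
With `m = N-k-1` and `s = d-k-1`, Pascal's rule `S(n+1, t+1) = S(n, t+1) + S(n, t)` reduces the
claim to `S(m, s) C(m+k, s+k) < C(m, s) S(m+k, s+k)`. The sum `S(m+k, s+k)` splits into the terms
`i < k`, which are positive, and the terms `C(m+k, i+k)` with `i < s`, each of which dominates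
`C(m, i) C(m+k, s+k) / C(m, s)` because `j ↦ C(m+k, j+k) / C(m, j)` is antitone: by
`C(n+k, j+k) C(j+k, k) = C(n+k, k) C(n, j)` it is proportional to `1 / C(j+k, k)`.
-/

open Finset

/-- `Q d k N = 2^k · (Σ_{i=0}^{d-k-1} C(N-k-1, i)) / (Σ_{i=0}^{d-1} C(N-1, i))`,
the normalized expected `k`-face number `E f_k(C_N)/C(N,k)` of the Cover–Efron cone. -/
noncomputable def Q (d k N : ℕ) : ℝ :=
  2 ^ k * (∑ i ∈ Finset.range (d - k), ((N - k - 1).choose i : ℝ)) /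
    (∑ i ∈ Finset.range d, ((N - 1).choose i : ℝ))

def chooseSum (n t : ℕ) : ℕ :=
  ∑ i ∈ range t, n.choose i

theorem chooseSum_succ (n t : ℕ) : chooseSum n (t + 1) = chooseSum n t + n.choose t :=
  sum_range_succ _ _

theorem chooseSum_pos {n t : ℕ} (ht : 0 < t) : 0 < chooseSum n t :=
  (Nat.choose_pos n.zero_le).trans_le (single_le_sum (fun _ _ => Nat.zero_le _) (mem_range.mpr ht))

theorem chooseSum_succ_succ (n t : ℕ) :
    chooseSum (n + 1) (t + 1) = chooseSum n (t + 1) + chooseSum n t := by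
  induction t with
  | zero => simp [chooseSum]
  | succ t ih =>
    rw [chooseSum_succ, ih, chooseSum_succ n (t + 1), chooseSum_succ n t, Nat.choose_succ_succ']
    ring

theorem choose_add_mul_choose (n k j : ℕ) :
    (n + k).choose (j + k) * (j + k).choose k = (n + k).choose k * n.choose j := by
  simpa using Nat.choose_mul (n := n + k) (k := j + k) (Nat.le_add_left k j)

theorem choose_mul_choose_add_le {n k a b : ℕ} (hab : a ≤ b) :
    n.choose a * (n + k).choose (b + k) ≤ n.choose b * (n + k).choose (a + k) := by
  refine Nat.le_of_mul_le_mul_right ?_ (Nat.choose_pos (Nat.le_add_left k b))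
  calc n.choose a * (n + k).choose (b + k) * (b + k).choose k
      = n.choose b * ((n + k).choose (a + k) * (a + k).choose k) := by
        rw [mul_assoc, choose_add_mul_choose, choose_add_mul_choose]; ring
    _ ≤ n.choose b * (n + k).choose (a + k) * (b + k).choose k := by
        rw [← mul_assoc]; gcongr

theorem chooseSum_mul_choose_lt {m k s : ℕ} (hk : 0 < k) (hs : s ≤ m) :
    chooseSum m s * (m + k).choose (s + k) < m.choose s * chooseSum (m + k) (s + k) := by
  have termwise : chooseSum m s * (m + k).choose (s + k)
      ≤ m.choose s * ∑ i ∈ range s, (m + k).choose (k + i) := by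
    rw [chooseSum, sum_mul, mul_sum]
    refine sum_le_sum fun i hi => ?_
    rw [add_comm k i]
    exact choose_mul_choose_add_le (mem_range.mp hi).le
  have split : chooseSum (m + k) (s + k)
      = chooseSum (m + k) k + ∑ i ∈ range s, (m + k).choose (k + i) := by
    rw [chooseSum, chooseSum, add_comm s k, sum_range_add]
  have head_pos : 0 < m.choose s * chooseSum (m + k) k :=
    Nat.mul_pos (Nat.choose_pos hs) (chooseSum_pos hk)
  rw [split, Nat.mul_add]
  omega

theorem chooseSum_succ_mul_lt {m k s : ℕ} (hk : 0 < k) (hs : s ≤ m) :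
    chooseSum (m + 1) (s + 1) * chooseSum (m + k) (s + k + 1)
      < chooseSum m (s + 1) * chooseSum (m + k + 1) (s + k + 1) := by
  rw [chooseSum_succ_succ, chooseSum_succ_succ, chooseSum_succ, chooseSum_succ]
  nlinarith [chooseSum_mul_choose_lt hk hs]

theorem Q_eq_chooseSum (d k N : ℕ) :
    Q d k N = 2 ^ k * (chooseSum (N - k - 1) (d - k) : ℝ) / chooseSum (N - 1) d := by
  simp [Q, chooseSum]

theorem Q_strict_anti (d k N : ℕ) (hk : 1 ≤ k) (hkd : k < d) (hdN : d < N) :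
    Q d k (N + 1) < Q d k N := by
  obtain ⟨s, rfl⟩ : ∃ s, d = s + k + 1 := ⟨d - k - 1, by omega⟩
  obtain ⟨m, rfl⟩ : ∃ m, N = m + k + 1 := ⟨N - k - 1, by omega⟩
  simp only [Q_eq_chooseSum, Nat.add_sub_cancel, show s + k + 1 - k = s + 1 by omega,
    show m + k + 1 - k - 1 = m by omega, show m + k + 1 + 1 - k - 1 = m + 1 by omega]
  have hpos {n : ℕ} : (0 : ℝ) < chooseSum n (s + k + 1) := mod_cast chooseSum_pos (by omega)
  rw [div_lt_div_iff₀ hpos hpos, mul_assoc, mul_assoc]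
  exact mul_lt_mul_of_pos_left (mod_cast chooseSum_succ_mul_lt hk (by omega)) (by positivity)
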